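/- Let C be a cocomplete category admitting a small dense subcategory. Then every cocontinuous functor S : C → B has a right adjoint. -/

import Mathlib

/-!
STATEMENT 9 (Kelly, Thm 5.33):
Let `C` be a cocomplete category admitting a small dense subcategory.
Then every cocontinuous functor `S : C ⥤ B` has a right adjoint.

A subcategory is encoded as a fully faithful functor `ι : D ⥤ C` from a small
category; density of `ι` means that the restricted Yoneda functor
`C ⥤ (Dᵒᵖ ⥤ Type v)` is fully faithful.
-/

open CategoryTheory CategoryTheory.Limits

universe v u u'

/-- The restricted Yoneda functor along `ι : D ⥤ C`, sending `X : C` to the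
presheaf `d ↦ C(ι d, X)` on `D`. -/
noncomputable def restrictedYonedaAlong {C : Type u} [Category.{v} C]
    {D : Type v} [SmallCategory D] (ι : D ⥤ C) : C ⥤ (Dᵒᵖ ⥤ Type v) :=
  yoneda ⋙ (Functor.whiskeringLeft Dᵒᵖ Cᵒᵖ (Type v)).obj ι.op

/-
Density makes the restricted Yoneda functor `R : C ⥤ (Dᵒᵖ ⥤ Type v)` fully faithful, and
cocompleteness of `C` gives it a left adjoint `L`, so `C` is reflective in presheaves on `D`.
The composite `L ⋙ S` is cocontinuous on a presheaf category, hence has a right adjoint `G`.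
By adjunction, the values of `G` are orthogonal to every morphism inverted by `L`, so they lie in
the essential image of `R`, and `G ⋙ L` is then right adjoint to `S`.
-/

universe w v₁ v₂ u₁ u₂

namespace CategoryTheory

instance Presheaf.hasPointwiseLeftKanExtension_of_preservesColimits
    {C : Type u₁} [Category.{v₁} C] {ℰ : Type u₂} [Category.{v₂} ℰ]
    (L : (Cᵒᵖ ⥤ Type max w v₁) ⥤ ℰ) [PreservesColimitsOfSize.{v₁, max u₁ w v₁} L] :
    uliftYoneda.{w}.HasPointwiseLeftKanExtension (uliftYoneda.{w} ⋙ L) := fun P =>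
  ⟨⟨⟨_, isColimitOfPreserves L (Presheaf.isColimitTautologicalCocone' P)⟩⟩⟩

lemma MorphismProperty.isLocal_rightAdjoint_obj {P B : Type*} [Category P] [Category B]
    {F : P ⥤ B} {G : B ⥤ P} (adj : F ⊣ G) (b : B) :
    ((MorphismProperty.isomorphisms B).inverseImage F).isLocal (G.obj b) := by
  intro X Y f (_ : IsIso (F.map f))
  have conj : (fun g : Y ⟶ G.obj b => f ≫ g) =
      adj.homEquiv X b ∘ (fun g => F.map f ≫ g) ∘ (adj.homEquiv Y b).symm := by
    ext g
    simp [← Adjunction.homEquiv_naturality_left_symm]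
  rw [conj]
  exact (adj.homEquiv X b).bijective.comp
    ((ObjectProperty.isLocal_of_isIso ⊤ (F.map f) b trivial).comp
      (adj.homEquiv Y b).symm.bijective)

namespace Adjunction

variable {C P B : Type*} [Category C] [Category P] [Category B]

lemma isIso_unit_app_of_isLocal {L : P ⥤ C} {R : C ⥤ P} (adj : L ⊣ R) [R.Full] [R.Faithful]
    {Y : P} (hY : ((MorphismProperty.isomorphisms C).inverseImage L).isLocal Y) :
    IsIso (adj.unit.app Y) := by
  -- `W` is the class of morphisms inverted by `L`; the unit at `Y` is a `W`-morphism between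
  -- `W`-local objects, hence an isomorphism.
  set W := ObjectProperty.isLocal (· ∈ Set.range R.obj)
  rw [← ObjectProperty.isLocal_eq_inverseImage_isomorphisms adj] at hY
  have hRL : W.isLocal (R.obj (L.obj Y)) :=
    (ObjectProperty.le_isLocal_iff _ W).mp le_rfl _ ⟨_, rfl⟩
  exact (ObjectProperty.isLocal_iff_isIso (P := W.isLocal) _ hY hRL).mp
    ((ObjectProperty.le_isLocal_iff _ _).mpr le_rfl _ (ObjectProperty.isLocal_adj_unit_app adj Y))

lemma isLeftAdjoint_of_isLeftAdjoint_comp {L : P ⥤ C} {R : C ⥤ P} (adj : L ⊣ R)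
    [R.Full] [R.Faithful] (S : C ⥤ B) [(L ⋙ S).IsLeftAdjoint] : S.IsLeftAdjoint := by
  let G := (L ⋙ S).rightAdjoint
  have hunit (b : B) : IsIso (adj.unit.app (G.obj b)) := by
    refine adj.isIso_unit_app_of_isLocal (MorphismProperty.isLocal_antitone ?_ _
      (MorphismProperty.isLocal_rightAdjoint_obj (Adjunction.ofIsLeftAdjoint (L ⋙ S)) b))
    intro X Y f (_ : IsIso (L.map f))
    exact (inferInstance : IsIso (S.map (L.map f)))
  have : IsIso adj.counit := adj.counit_isIso_of_R_fully_faithful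
  let restrictS : R ⋙ L ⋙ S ≅ S ⋙ 𝟭 B := (Functor.associator _ _ _).symm ≪≫
    Functor.isoWhiskerRight (asIso adj.counit) S ≪≫ S.leftUnitor ≪≫ S.rightUnitor.symm
  let corestrictG : 𝟭 B ⋙ G ≅ (G ⋙ L) ⋙ R :=
    NatIso.ofComponents (fun b => asIso (adj.unit.app (G.obj b)))
      (fun f => adj.unit.naturality (G.map f))
  exact ⟨G ⋙ L, ⟨(Adjunction.ofIsLeftAdjoint (L ⋙ S)).restrictFullyFaithful
    (.ofFullyFaithful R) (Functor.FullyFaithful.id B) restrictS corestrictG⟩⟩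

end Adjunction

lemma isRightAdjoint_restrictedYonedaAlong {C : Type u} [Category.{v} C] [HasColimits C]
    {D : Type v} [SmallCategory D] (ι : D ⥤ C) : (restrictedYonedaAlong ι).IsRightAdjoint :=
  ⟨_, ⟨(Presheaf.uliftYonedaAdjunction.{v} _ (uliftYoneda.{v}.leftKanExtensionUnit ι)).ofNatIsoRight
    (Functor.isoWhiskerRight uliftYonedaIsoYoneda.{v} _)⟩⟩

end CategoryTheory

theorem statement9_general
    {C : Type u} [Category.{v} C] {B : Type u'} [Category.{v} B]
    [HasColimits C]
    -- a small dense subcategory: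
    {D : Type v} [SmallCategory D] (ι : D ⥤ C)
    (hdenseFull : (restrictedYonedaAlong ι).Full)
    (hdenseFaithful : (restrictedYonedaAlong ι).Faithful)
    -- a cocontinuous functor:
    (S : C ⥤ B) (hS : PreservesColimits S) :
    S.IsLeftAdjoint := by
  have := isRightAdjoint_restrictedYonedaAlong ι
  let adj := Adjunction.ofIsRightAdjoint (restrictedYonedaAlong ι)
  have : ((restrictedYonedaAlong ι).leftAdjoint ⋙ S).IsLeftAdjoint :=
    Presheaf.isLeftAdjoint_of_preservesColimits.{v} _
  exact adj.isLeftAdjoint_of_isLeftAdjoint_comp S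

theorem statement9
    {C : Type u} [Category.{v} C] {B : Type u'} [Category.{v} B]
    [HasColimits C]
    -- a small dense subcategory:
    {D : Type v} [SmallCategory D] (ι : D ⥤ C) (hfull : ι.Full) (hfaithful : ι.Faithful)
    (hdenseFull : (restrictedYonedaAlong ι).Full)
    (hdenseFaithful : (restrictedYonedaAlong ι).Faithful)
    -- a cocontinuous functor:
    (S : C ⥤ B) (hS : PreservesColimits S) :
    S.IsLeftAdjoint :=
  statement9_general ι hdenseFull hdenseFaithful S hS
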